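/- Let G be a finite connected undirected graph with positive conductances and marked vertex b, and let u,v be vertices distinct from b. Under the probability measure P on two-component spanning forests proportional to weight, the probability that both u and v lie in the floating component Σ equals (κ(G)/κ₂(G))·G_{u,v}. Equivalently, the sum of the weights of all 2SFs whose floating component contains both u and v equals κ(G)·G_{u,v}. -/

import Mathlib

/-!
Write `S(a, q)` (`floatingWt`) for the total weight of the 2SFs whose floating component
contains `a` and `q`; the claim is `S = κ · G`, i.e. `Δ_D S = κ · I`.

Since `S(b, q) = 0`, row `u` of `Δ_D S` is `∑_w c(uw) (S(u, q) - S(w, q))`. The difference only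
sees 2SFs separating `u` from `w`, and adding the edge `uw` maps these bijectively onto the
spanning trees through `uw`, multiplying weights by `c(uw)`. In a spanning tree, `q` is cut off
from `b` by removing `uw` iff `uw` lies on the path from `q` to `b`. So a tree `T` contributes
`wt T` times the number of edges at `u` on the `q`–`b` path that also lie on the `u`–`b` path,
minus the number of those that do not, and this difference is `1` if `u = q` and `0` otherwise.
-/

open scoped Classical BigOperators

noncomputable section

namespace TwoSF

variable {V : Type*} [Fintype V] [DecidableEq V]

/-- `u` and `v` are linked by the edges in `B`. -/
def Linked (B : Finset (Sym2 V)) : V → V → Prop :=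
  Relation.ReflTransGen fun a b => s(a, b) ∈ B

/-- The number of connected components of the spanning subgraph `(V, B)`. -/
def ncomp (B : Finset (Sym2 V)) : ℕ :=
  Nat.card (Quot (Linked B))

/-- `B` is a spanning forest of the complete graph on `V` with exactly `k`
connected components: it has `k` components and, by the rank count
`|B| + k = |V|`, it is acyclic (in particular it contains no loop edge).
Taking `k = 1` gives spanning trees, `k = 2` gives two-component spanning
forests (2SF). -/
def IsSF (k : ℕ) (B : Finset (Sym2 V)) : Prop :=
  ncomp B = k ∧ B.card + k = Fintype.card V

/-- The weight of an edge set: the product of its conductances. -/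
def wt (c : Sym2 V → ℝ) (B : Finset (Sym2 V)) : ℝ := ∏ e ∈ B, c e

/-- κ: the weighted sum of spanning trees.  Edge sets containing a non-edge
(an `e` with `c e = 0`) contribute weight `0`, so this is the weighted number
of spanning trees of the graph whose edges are the support of `c`. -/
def kappa1 (c : Sym2 V → ℝ) : ℝ := ∑ B ∈ Finset.univ.filter (IsSF 1), wt c B

/-- κ₂: the weighted sum of two-component spanning forests. -/
def kappa2 (c : Sym2 V → ℝ) : ℝ := ∑ B ∈ Finset.univ.filter (IsSF 2), wt c B

/-- The floating component of `B`: the set of vertices not linked to `b`. -/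
def floating (b : V) (B : Finset (Sym2 V)) : Finset V :=
  Finset.univ.filter fun v => ¬ Linked B b v

/-- The graph Laplacian `Δ` of the graph with conductances `c`. -/
def lap (c : Sym2 V → ℝ) : Matrix V V ℝ := fun u v =>
  if u = v then ∑ w ∈ Finset.univ.filter (· ≠ u), c s(u, w) else -c s(u, v)

/-- The Dirichlet Laplacian `Δ_D`, indexed by `V \ {b}`. -/
def dlap (c : Sym2 V → ℝ) (b : V) : Matrix {w : V // w ≠ b} {w : V // w ≠ b} ℝ :=
  Matrix.of fun p q => lap c p.1 q.1

/-- The Green function with Dirichlet boundary condition at `b` (the inverse of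
the Dirichlet Laplacian), with the convention that it vanishes as soon as one
of its arguments is `b`. -/
def green (c : Sym2 V → ℝ) (b : V) (u v : V) : ℝ :=
  if hu : u = b then 0 else if hv : v = b then 0 else (dlap c b)⁻¹ ⟨u, hu⟩ ⟨v, hv⟩

/-- The probability of the event `p` under the probability measure on
two-component spanning forests assigning to each 2SF a probability
proportional to its weight. -/
def pr2 (c : Sym2 V → ℝ) (p : Finset (Sym2 V) → Prop) : ℝ :=
  (∑ B ∈ Finset.univ.filter (fun B => IsSF 2 B ∧ p B), wt c B) / kappa2 c

/-- The expectation of `((floating b B).card : ℝ) ^ k`, i.e. of `|Σ|^k`, under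
the probability measure on two-component spanning forests proportional to
weight. -/
def expPow (c : Sym2 V → ℝ) (b : V) (k : ℕ) : ℝ :=
  (∑ B ∈ Finset.univ.filter (IsSF 2), wt c B * ((floating b B).card : ℝ) ^ k) / kappa2 c

/-- `|∂Σ|`: the sum of the conductances of the edges having exactly one
endpoint in the floating component of `B`. -/
def bdryWt (c : Sym2 V → ℝ) (b : V) (B : Finset (Sym2 V)) : ℝ :=
  ∑ u ∈ floating b B, ∑ v ∈ (floating b B)ᶜ, c s(u, v)

/-- The expectation of `|∂Σ|` under the probability measure on two-component
spanning forests proportional to weight. -/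
def expBdry (c : Sym2 V → ℝ) (b : V) : ℝ :=
  (∑ B ∈ Finset.univ.filter (IsSF 2), wt c B * bdryWt c b B) / kappa2 c

end TwoSF

namespace SimpleGraph

open Finset

variable {V : Type*} {G : SimpleGraph V}

lemma IsAcyclic.walk_eq_of_isPath (hG : G.IsAcyclic) {u v : V} {p q : G.Walk u v}
    (hp : p.IsPath) (hq : q.IsPath) : p = q :=
  congrArg Subtype.val ((hG.subsingleton_path u v).elim ⟨p, hp⟩ ⟨q, hq⟩)

lemma IsAcyclic.mem_edges_iff_not_reachable_deleteEdges (hG : G.IsAcyclic) {u v x y : V}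
    {p : G.Walk u v} (hp : p.IsPath) :
    s(x, y) ∈ p.edges ↔ ¬ (G.deleteEdges {s(x, y)}).Reachable u v := by
  rw [reachable_deleteEdges_iff_exists_walk, not_exists_not]
  refine ⟨fun he q => ?_, fun h => h p⟩
  rw [← hG.walk_eq_of_isPath q.bypass_isPath hp] at he
  exact q.edges_bypass_subset_edges he

variable [Fintype V] [DecidableEq V]

lemma Walk.IsPath.card_filter_mem_edges_start {u v : V} {p : G.Walk u v} (hp : p.IsPath) :
    #{w | s(u, w) ∈ p.edges} = if u = v then 0 else 1 := by
  cases p with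
  | nil => simp
  | @cons _ y _ h q =>
    have hu : u ∉ q.support := ((Walk.cons_isPath_iff h q).mp hp).2
    rw [if_neg fun huv : u = _ => hu (huv ▸ q.end_mem_support), card_eq_one]
    refine ⟨y, eq_singleton_iff_unique_mem.mpr ⟨by simp, fun w hw => ?_⟩⟩
    rw [mem_filter, Walk.edges_cons, List.mem_cons] at hw
    rcases hw.2 with hw | hw
    · rcases Sym2.eq_iff.mp hw with ⟨-, rfl⟩ | ⟨rfl, -⟩
      · rfl
      · exact absurd rfl h.ne
    · exact absurd (q.fst_mem_support_of_mem_edges hw) hu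

/-- For `u ≠ b` in a forest: if `u` lies on the path from `q` to `b`, that path ends with the
path from `u` to `b` and enters `u` by one more edge unless `u = q`. -/
lemma IsAcyclic.card_filter_mem_edges_path {b u q : V} (hG : G.IsAcyclic) (hu : u ≠ b)
    {pu : G.Walk u b} {pq : G.Walk q b} (hpu : pu.IsPath) (hpq : pq.IsPath) :
    #{w | s(u, w) ∈ pu.edges ∧ s(u, w) ∈ pq.edges} =
      #{w | s(u, w) ∉ pu.edges ∧ s(u, w) ∈ pq.edges} + if u = q then 1 else 0 := by
  by_cases hsup : u ∈ pq.support
  · set t := pq.takeUntil u hsup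
    have hdrop : pq.dropUntil u hsup = pu := hG.walk_eq_of_isPath (hpq.dropUntil hsup) hpu
    have hedges : pq.edges = t.edges ++ pu.edges := by
      rw [← hdrop, ← Walk.edges_append, Walk.take_spec]
    have hdisj : t.edges.Disjoint pu.edges :=
      List.disjoint_of_nodup_append (hedges ▸ hpq.edges_nodup)
    have hfirst : #{w | s(u, w) ∈ pu.edges ∧ s(u, w) ∈ pq.edges} = 1 := by
      rw [filter_congr fun w _ => and_iff_left_of_imp fun h => hedges ▸ List.mem_append_right _ h,
        hpu.card_filter_mem_edges_start, if_neg hu]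
    have hsecond : #{w | s(u, w) ∉ pu.edges ∧ s(u, w) ∈ pq.edges} = if u = q then 0 else 1 := by
      rw [← (hpq.takeUntil hsup).reverse.card_filter_mem_edges_start]
      congr 1
      ext w
      simp only [mem_filter, mem_univ, true_and, hedges, List.mem_append,
        Walk.edges_reverse, List.mem_reverse]
      exact ⟨fun h => h.2.resolve_right h.1, fun h => ⟨hdisj h, .inl h⟩⟩
    rw [hfirst, hsecond]
    split_ifs <;> rfl
  · have hempty {w : V} : s(u, w) ∉ pq.edges := fun hw => hsup (pq.fst_mem_support_of_mem_edges hw)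
    have huq : u ≠ q := fun huq => hsup (huq ▸ pq.start_mem_support)
    simp [hempty, huq]

end SimpleGraph

namespace TwoSF

open Finset SimpleGraph

section Linked

variable {V : Type*} {B B' : Finset (Sym2 V)} {a d x y : V}

lemma linked_of_mem (h : s(a, d) ∈ B) : Linked B a d := .single h

lemma linked_mono (hBB' : B ⊆ B') (h : Linked B a d) : Linked B' a d :=
  Relation.ReflTransGen.mono (fun _ _ he => hBB' he) _ _ h

lemma linked_equivalence (B : Finset (Sym2 V)) : Equivalence (Linked B) where
  refl _ := .refl
  symm h :=
    have : Std.Symm fun a d : V => s(a, d) ∈ B := ⟨fun _ _ h => by rwa [Sym2.eq_swap]⟩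
    Std.Symm.symm (r := Relation.ReflTransGen _) _ _ h
  trans := .trans

lemma linked_symm (h : Linked B a d) : Linked B d a := (linked_equivalence B).symm h

lemma linked_trans (h : Linked B a d) (h' : Linked B d x) : Linked B a x :=
  (linked_equivalence B).trans h h'

lemma linked_comm : Linked B a d ↔ Linked B d a := ⟨linked_symm, linked_symm⟩

lemma linked_empty_iff : Linked (∅ : Finset (Sym2 V)) a d ↔ d = a :=
  Relation.reflTransGen_iff_eq fun _ h => notMem_empty _ h

lemma quot_mk_eq_iff_linked :
    Quot.mk (Linked B) a = Quot.mk (Linked B) d ↔ Linked B a d :=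
  Quot.eq.trans (linked_equivalence B).eqvGen_iff

variable [DecidableEq V]

lemma linked_insert_iff :
    Linked (insert s(x, y) B) a d ↔
      Linked B a d ∨ (Linked B a x ∧ Linked B y d) ∨ (Linked B a y ∧ Linked B x d) := by
  constructor
  · intro h
    induction h with
    | refl => exact .inl .refl
    | @tail p q _ hpq ih =>
      rcases mem_insert.mp hpq with hpq | hpq
      · obtain ⟨rfl, rfl⟩ | ⟨rfl, rfl⟩ := Sym2.eq_iff.mp hpq <;>
          rcases ih with h | ⟨h, -⟩ | ⟨h, -⟩ <;> simp_all [Linked, Relation.ReflTransGen.refl]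
      · have hq := linked_of_mem hpq
        rcases ih with h | ⟨h, h'⟩ | ⟨h, h'⟩
        · exact .inl (linked_trans h hq)
        · exact .inr (.inl ⟨h, linked_trans h' hq⟩)
        · exact .inr (.inr ⟨h, linked_trans h' hq⟩)
  · have hsub : B ⊆ insert s(x, y) B := subset_insert _ _
    have hxy : Linked (insert s(x, y) B) x y := linked_of_mem (mem_insert_self _ _)
    rintro (h | ⟨h, h'⟩ | ⟨h, h'⟩)
    · exact linked_mono hsub h
    · exact linked_trans (linked_trans (linked_mono hsub h) hxy) (linked_mono hsub h')
    · exact linked_trans (linked_trans (linked_mono hsub h) (linked_symm hxy)) (linked_mono hsub h')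

end Linked

section ComponentCount

variable {V : Type*} {B B' : Finset (Sym2 V)} {x y : V}

lemma ncomp_congr (h : ∀ a d, Linked B a d ↔ Linked B' a d) : ncomp B = ncomp B' :=
  Nat.card_congr (Quot.congr (Equiv.refl V) h)

lemma ncomp_empty [Fintype V] : ncomp (∅ : Finset (Sym2 V)) = Fintype.card V := by
  rw [← Nat.card_eq_fintype_card]
  exact Nat.card_congr
    ⟨Quot.lift id fun _ _ h => (linked_empty_iff.mp h).symm, Quot.mk _,
      by rintro ⟨v⟩; rfl, fun _ => rfl⟩

lemma ncomp_eq_one_iff : ncomp B = 1 ↔ Nonempty V ∧ ∀ a d, Linked B a d := by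
  rw [ncomp, Nat.card_eq_one_iff_unique, and_comm, Quot.subsingleton_iff,
    (linked_equivalence B).eqvGen_eq]
  exact and_congr ⟨fun ⟨z⟩ => ⟨z.exists_rep.choose⟩, fun ⟨v⟩ => ⟨Quot.mk _ v⟩⟩
    ⟨fun h a d => h ▸ trivial, fun h => funext₂ fun a d => eq_true (h a d)⟩

variable [DecidableEq V]

lemma ncomp_insert_of_linked (h : Linked B x y) : ncomp (insert s(x, y) B) = ncomp B := by
  refine ncomp_congr fun a d => linked_insert_iff.trans ⟨?_, .inl⟩
  rintro (h' | ⟨h₁, h₂⟩ | ⟨h₁, h₂⟩)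
  · exact h'
  · exact linked_trans (linked_trans h₁ h) h₂
  · exact linked_trans (linked_trans h₁ (linked_symm h)) h₂

/-- Moving the class of `y` onto `x` identifies the components of `insert s(x, y) B` with the
components of `B` other than `⟦y⟧`. -/
lemma ncomp_insert_add_one_of_not_linked [Finite V] (h : ¬ Linked B x y) :
    ncomp (insert s(x, y) B) + 1 = ncomp B := by
  set B₂ := insert s(x, y) B
  let ρ : V → V := fun v => if Linked B y v then x else v
  have hρ_of_linked {v} (hv : Linked B y v) : ρ v = x := if_pos hv
  have hρ_of_not_linked {v} (hv : ¬ Linked B y v) : ρ v = v := if_neg hv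
  have hρ_not_linked (v : V) : ¬ Linked B (ρ v) y := by
    by_cases hv : Linked B y v
    · rw [hρ_of_linked hv]; exact h
    · rw [hρ_of_not_linked hv]; exact fun h' => hv (linked_symm h')
  have hρ_linked (v : V) : Linked B₂ (ρ v) v := by
    by_cases hv : Linked B y v
    · rw [hρ_of_linked hv]
      exact linked_insert_iff.mpr (.inr (.inl ⟨.refl, hv⟩))
    · rw [hρ_of_not_linked hv]
      exact .refl
  have hρ_linked_of_linked {v v'} (hvv' : Linked B₂ v v') : Linked B (ρ v) (ρ v') := by
    have := linked_trans (linked_trans (hρ_linked v) hvv') (linked_symm (hρ_linked v'))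
    rcases linked_insert_iff.mp this with h' | ⟨-, hy⟩ | ⟨hy, -⟩
    · exact h'
    · exact absurd (linked_symm hy) (hρ_not_linked v')
    · exact absurd hy (hρ_not_linked v)
  let C := {z : Quot (Linked B) // z ≠ Quot.mk _ y}
  let e : Quot (Linked B₂) ≃ C :=
    { toFun := Quot.lift
        (fun v => ⟨Quot.mk _ (ρ v), mt quot_mk_eq_iff_linked.mp (hρ_not_linked v)⟩)
        fun _ _ hvv' => Subtype.ext (quot_mk_eq_iff_linked.mpr (hρ_linked_of_linked hvv'))
      invFun := fun z => Quot.map id (fun _ _ => linked_mono (subset_insert _ _)) z.1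
      left_inv := by
        rintro ⟨v⟩
        exact quot_mk_eq_iff_linked.mpr (hρ_linked v)
      right_inv := by
        rintro ⟨⟨v⟩, hv⟩
        refine Subtype.ext (congrArg (Quot.mk _) (hρ_of_not_linked fun hyv => hv ?_))
        exact quot_mk_eq_iff_linked.mpr (linked_symm hyv) }
  rw [ncomp, Nat.card_congr e, ← Finite.card_option, ncomp]
  exact Nat.card_congr (Equiv.optionSubtypeNe _)

end ComponentCount

section Forest

variable {V : Type*} [Fintype V] {B : Finset (Sym2 V)} {k : ℕ} {x y : V}

lemma card_le_ncomp_add_card (B : Finset (Sym2 V)) : Fintype.card V ≤ ncomp B + B.card := by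
  induction B using Finset.induction_on with
  | empty => simp [ncomp_empty]
  | @insert e B he ih =>
    induction e using Sym2.ind with
    | _ x y =>
      rw [card_insert_of_notMem he]
      by_cases h : Linked B x y
      · rw [ncomp_insert_of_linked h]; omega
      · have := ncomp_insert_add_one_of_not_linked h; omega

lemma IsSF.linked_of_one (hT : IsSF 1 B) (a d : V) : Linked B a d :=
  (ncomp_eq_one_iff.mp hT.1).2 a d

variable [DecidableEq V]

lemma IsSF.not_linked_erase (hB : IsSF k B) (he : s(x, y) ∈ B) :
    ¬ Linked (B.erase s(x, y)) x y := fun h => by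
  have hcount := ncomp_insert_of_linked h
  rw [insert_erase he, hB.1] at hcount
  have := card_le_ncomp_add_card (B.erase s(x, y))
  have := card_erase_add_one he
  have := hB.2
  omega

lemma IsSF.erase (hB : IsSF k B) (he : s(x, y) ∈ B) : IsSF (k + 1) (B.erase s(x, y)) := by
  have hcount := ncomp_insert_add_one_of_not_linked (hB.not_linked_erase he)
  rw [insert_erase he, hB.1] at hcount
  have := card_erase_add_one he
  exact ⟨by omega, by have := hB.2; omega⟩

lemma IsSF.insert (hB : IsSF (k + 1) B) (h : ¬ Linked B x y) :
    IsSF k (insert s(x, y) B) := by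
  have := ncomp_insert_add_one_of_not_linked h
  have := card_insert_of_notMem fun he => h (linked_of_mem he)
  exact ⟨by have := hB.1; omega, by have := hB.2; omega⟩

end Forest

section Tree

variable {V : Type*} {B T : Finset (Sym2 V)} {a d x y : V}

def toGraph (B : Finset (Sym2 V)) : SimpleGraph V := fromEdgeSet ↑B

lemma reachable_toGraph_iff : (toGraph B).Reachable a d ↔ Linked B a d := by
  rw [reachable_iff_reflTransGen]
  refine ⟨Relation.ReflTransGen.mono (fun _ _ h => ((fromEdgeSet_adj _).mp h).1) _ _,
    fun h => ?_⟩
  induction h with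
  | refl => exact .refl
  | @tail p q _ hpq ih =>
    by_cases h : p = q
    · exact h ▸ ih
    · exact ih.tail ((fromEdgeSet_adj _).mpr ⟨hpq, h⟩)

lemma toGraph_erase [DecidableEq V] (B : Finset (Sym2 V)) (e : Sym2 V) :
    toGraph (B.erase e) = (toGraph B).deleteEdges {e} := by
  rw [toGraph, toGraph, deleteEdges_fromEdgeSet, coe_erase]

lemma mem_of_mem_edges {p : (toGraph B).Walk a d} {e : Sym2 V} (he : e ∈ p.edges) : e ∈ B := by
  have := p.edges_subset_edgeSet he
  rw [toGraph, edgeSet_fromEdgeSet] at this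
  exact this.1

variable [Fintype V]

lemma IsSF.isTree_toGraph (hT : IsSF 1 T) : (toGraph T).IsTree := by
  have : Nonempty V := Fintype.card_pos_iff.mp (by have := hT.2; omega)
  refine ⟨⟨fun a d => reachable_toGraph_iff.mpr (hT.linked_of_one a d)⟩, ?_⟩
  refine isAcyclic_iff_forall_adj_isBridge.mpr fun x y hxy => ?_
  rw [isBridge_iff, ← toGraph_erase, reachable_toGraph_iff]
  exact hT.not_linked_erase ((fromEdgeSet_adj _).mp hxy).1

variable [DecidableEq V]

lemma IsSF.not_linked_erase_iff_mem_edges (hT : IsSF 1 T) {p : (toGraph T).Walk a d}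
    (hp : p.IsPath) : ¬ Linked (T.erase s(x, y)) d a ↔ s(x, y) ∈ p.edges := by
  rw [linked_comm, ← reachable_toGraph_iff, toGraph_erase,
    hT.isTree_toGraph.isAcyclic.mem_edges_iff_not_reachable_deleteEdges hp]

lemma IsSF.linked_erase_iff_not_linked (hT : IsSF 1 T) (he : s(x, y) ∈ T) (b : V) :
    Linked (T.erase s(x, y)) b x ↔ ¬ Linked (T.erase s(x, y)) b y := by
  refine ⟨fun hx hy => hT.not_linked_erase he (linked_trans (linked_symm hx) hy), fun hy => ?_⟩
  have hbx := hT.linked_of_one b x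
  rw [← insert_erase he, linked_insert_iff] at hbx
  rcases hbx with hbx | ⟨hbx, -⟩ | ⟨hby, -⟩
  · exact hbx
  · exact hbx
  · exact absurd hby hy

lemma IsSF.card_filter_cut_eq (hT : IsSF 1 T) {b u q : V} (hu : u ≠ b) :
    #{w | s(u, w) ∈ T ∧ ¬ Linked (T.erase s(u, w)) b u ∧ ¬ Linked (T.erase s(u, w)) b q} =
      #{w | s(u, w) ∈ T ∧ Linked (T.erase s(u, w)) b u ∧ ¬ Linked (T.erase s(u, w)) b q} +
        if u = q then 1 else 0 := by
  obtain ⟨pu, hpu, -⟩ := hT.isTree_toGraph.existsUnique_path u b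
  obtain ⟨pq, hpq, -⟩ := hT.isTree_toGraph.existsUnique_path q b
  have hcut {w : V} (h : s(u, w) ∈ pq.edges) : s(u, w) ∈ T := mem_of_mem_edges h
  have hfloat (w : V) : (s(u, w) ∈ T ∧ ¬ Linked (T.erase s(u, w)) b u ∧
      ¬ Linked (T.erase s(u, w)) b q) ↔ s(u, w) ∈ pu.edges ∧ s(u, w) ∈ pq.edges := by
    rw [hT.not_linked_erase_iff_mem_edges hpu, hT.not_linked_erase_iff_mem_edges hpq]
    exact ⟨fun h => h.2, fun h => ⟨hcut h.2, h⟩⟩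
  have hroot (w : V) : (s(u, w) ∈ T ∧ Linked (T.erase s(u, w)) b u ∧
      ¬ Linked (T.erase s(u, w)) b q) ↔ s(u, w) ∉ pu.edges ∧ s(u, w) ∈ pq.edges := by
    rw [← hT.not_linked_erase_iff_mem_edges hpu, not_not,
      hT.not_linked_erase_iff_mem_edges hpq]
    exact ⟨fun h => h.2, fun h => ⟨hcut h.2, h⟩⟩
  rw [filter_congr fun w _ => hfloat w, filter_congr fun w _ => hroot w]
  exact hT.isTree_toGraph.isAcyclic.card_filter_mem_edges_path hu hpu hpq

end Tree

section WeightedSum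

variable {V : Type*} [Fintype V] (c : Sym2 V → ℝ)

def wtSum (P : Finset (Sym2 V) → Prop) : ℝ := ∑ B ∈ univ.filter P, wt c B

variable {c}

lemma sum_filter_wt_eq_wtSum (P : Finset (Sym2 V) → Prop) [DecidablePred P] :
    ∑ B ∈ univ.filter P, wt c B = wtSum c P := by
  rw [wtSum]
  congr

lemma wtSum_congr {P Q : Finset (Sym2 V) → Prop} (h : ∀ B, P B ↔ Q B) :
    wtSum c P = wtSum c Q := by
  rw [funext fun B => propext (h B)]

lemma wtSum_eq_zero {P : Finset (Sym2 V) → Prop} (h : ∀ B, ¬ P B) : wtSum c P = 0 := by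
  rw [wtSum, filter_false_of_mem fun B _ => h B, sum_empty]

lemma wtSum_eq_add (P R : Finset (Sym2 V) → Prop) :
    wtSum c P = wtSum c (fun B => P B ∧ R B) + wtSum c (fun B => P B ∧ ¬ R B) := by
  rw [wtSum, ← sum_filter_add_sum_filter_not (univ.filter P) R, filter_filter, filter_filter,
    sum_filter_wt_eq_wtSum, sum_filter_wt_eq_wtSum]

lemma sum_wtSum_eq_sum_card (Q : Finset (Sym2 V) → Prop) (P : V → Finset (Sym2 V) → Prop)
    [∀ w T, Decidable (P w T)] :
    ∑ w, wtSum c (fun T => Q T ∧ P w T) = ∑ T ∈ univ.filter Q, #{w | P w T} * wt c T := by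
  simp only [wtSum, sum_filter]
  rw [sum_comm]
  refine sum_congr rfl fun T _ => ?_
  by_cases hT : Q T <;> simp [hT, sum_ite]

variable [DecidableEq V]

lemma mul_wtSum_isSF_two {u w : V} {P : Finset (Sym2 V) → Prop}
    (hP : ∀ B, P B → ¬ Linked B u w) :
    c s(u, w) * wtSum c (fun B => IsSF 2 B ∧ P B) =
      wtSum c (fun T => IsSF 1 T ∧ s(u, w) ∈ T ∧ P (T.erase s(u, w))) := by
  have hnot {B} (hB : P B) : s(u, w) ∉ B := fun he => hP B hB (linked_of_mem he)
  rw [wtSum, wtSum, mul_sum]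
  refine sum_nbij' (insert s(u, w)) (·.erase s(u, w)) ?_ ?_ ?_ ?_ ?_ <;>
    simp only [mem_filter, mem_univ, true_and]
  · exact fun B hB => ⟨hB.1.insert (hP B hB.2), mem_insert_self _ _,
      by rw [erase_insert (hnot hB.2)]; exact hB.2⟩
  · exact fun T hT => ⟨hT.1.erase hT.2.1, hT.2.2⟩
  · exact fun B hB => erase_insert (hnot hB.2)
  · exact fun T hT => insert_erase hT.2.1
  · exact fun B hB => by rw [wt, wt, prod_insert (hnot hB.2)]

end WeightedSum

section Green

variable {V : Type*} [Fintype V] (c : Sym2 V → ℝ) (b : V)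

def floatingWt (a q : V) : ℝ := wtSum c fun B => IsSF 2 B ∧ ¬ Linked B b a ∧ ¬ Linked B b q

variable {c b}

lemma floatingWt_base (q : V) : floatingWt c b b q = 0 :=
  wtSum_eq_zero fun _ h => h.2.1 .refl

lemma kappa1_pos (hc : ∀ e, 0 ≤ c e)
    (hconn : ncomp (univ.filter fun e : Sym2 V => c e ≠ 0) = 1) : 0 < kappa1 c := by
  obtain ⟨hne, hlinked⟩ := ncomp_eq_one_iff.mp hconn
  have hG : (toGraph (univ.filter fun e : Sym2 V => c e ≠ 0)).Connected :=
    ⟨fun a d => reachable_toGraph_iff.mpr (hlinked a d)⟩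
  obtain ⟨T, hTG, hT⟩ := hG.exists_isTree_le
  have hTT : toGraph T.edgeFinset = T := by rw [toGraph, coe_edgeFinset, fromEdgeSet_edgeSet]
  have hTsf : IsSF 1 T.edgeFinset := by
    refine ⟨ncomp_eq_one_iff.mpr ⟨hne, fun a d => ?_⟩, hT.card_edgeFinset⟩
    rw [← reachable_toGraph_iff, hTT]
    exact hT.connected a d
  refine sum_pos' (fun B _ => prod_nonneg fun e _ => hc e)
    ⟨T.edgeFinset, mem_filter.mpr ⟨mem_univ _, hTsf⟩, prod_pos fun e he => ?_⟩
  have hcE : e ∈ (toGraph (univ.filter fun e : Sym2 V => c e ≠ 0)).edgeSet :=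
    edgeSet_mono hTG (mem_edgeFinset.mp he)
  rw [toGraph, edgeSet_fromEdgeSet, coe_filter] at hcE
  exact (hc e).lt_of_ne' hcE.1.2

variable [DecidableEq V]

lemma conductance_mul_floatingWt_sub (u w q : V) :
    c s(u, w) * (floatingWt c b u q - floatingWt c b w q) =
      wtSum c (fun T => IsSF 1 T ∧ s(u, w) ∈ T ∧
        ¬ Linked (T.erase s(u, w)) b u ∧ ¬ Linked (T.erase s(u, w)) b q) -
      wtSum c (fun T => IsSF 1 T ∧ s(u, w) ∈ T ∧
        Linked (T.erase s(u, w)) b u ∧ ¬ Linked (T.erase s(u, w)) b q) := by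
  set both := wtSum c fun B => IsSF 2 B ∧ ¬ Linked B b u ∧ ¬ Linked B b w ∧ ¬ Linked B b q
  have hsplit_u : floatingWt c b u q =
      wtSum c (fun B => IsSF 2 B ∧ ¬ Linked B b u ∧ Linked B b w ∧ ¬ Linked B b q) + both := by
    rw [floatingWt, wtSum_eq_add _ fun B => Linked B b w]
    congr 1 <;> exact wtSum_congr fun B => by tauto
  have hsplit_w : floatingWt c b w q =
      wtSum c (fun B => IsSF 2 B ∧ Linked B b u ∧ ¬ Linked B b w ∧ ¬ Linked B b q) + both := by
    rw [floatingWt, wtSum_eq_add _ fun B => Linked B b u]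
    congr 1 <;> exact wtSum_congr fun B => by tauto
  rw [hsplit_u, hsplit_w, add_sub_add_right_eq_sub, mul_sub,
    mul_wtSum_isSF_two fun B h huw => h.1 (linked_trans h.2.1 (linked_symm huw)),
    mul_wtSum_isSF_two fun B h huw => h.2.1 (linked_trans h.1 huw)]
  congr 1 <;> refine wtSum_congr fun T => and_congr_right fun hT => and_congr_right fun he => ?_
  · have := hT.linked_erase_iff_not_linked he b
    tauto
  · have := hT.linked_erase_iff_not_linked he b
    tauto

lemma sum_lap_mul (u : V) (f : V → ℝ) :
    ∑ w, lap c u w * f w = ∑ w, c s(u, w) * (f u - f w) := by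
  have hdiag : lap c u u = ∑ w ∈ univ.erase u, c s(u, w) := by
    rw [lap, if_pos rfl, filter_ne']
  calc ∑ w, lap c u w * f w = lap c u u * f u + ∑ w ∈ univ.erase u, lap c u w * f w :=
        (add_sum_erase _ _ (mem_univ u)).symm
    _ = ∑ w ∈ univ.erase u, c s(u, w) * (f u - f w) := by
        rw [hdiag, sum_mul, ← sum_add_distrib]
        refine sum_congr rfl fun w hw => ?_
        rw [lap, if_neg (ne_of_mem_erase hw).symm]
        ring
    _ = ∑ w, c s(u, w) * (f u - f w) := sum_erase _ (by rw [sub_self, mul_zero])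

lemma sum_lap_mul_floatingWt {u : V} (hu : u ≠ b) (q : V) :
    ∑ w, lap c u w * floatingWt c b w q = kappa1 c * if u = q then 1 else 0 := by
  simp_rw [sum_lap_mul, conductance_mul_floatingWt_sub]
  rw [sum_sub_distrib, sum_wtSum_eq_sum_card, sum_wtSum_eq_sum_card, ← sum_sub_distrib, kappa1,
    sum_mul]
  refine sum_congr rfl fun T hT => ?_
  rw [← sub_mul, (mem_filter.mp hT).2.card_filter_cut_eq hu]
  push_cast
  ring

lemma dlap_mul_floatingWt :
    dlap c b * Matrix.of (fun p q : {w // w ≠ b} => floatingWt c b p q) = kappa1 c • 1 := by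
  ext p q
  rw [Matrix.mul_apply, Matrix.smul_apply, Matrix.one_apply, smul_eq_mul]
  have := sum_lap_mul_floatingWt (c := c) p.2 q
  rw [Fintype.sum_eq_add_sum_subtype_ne _ b, floatingWt_base, mul_zero, zero_add] at this
  simpa [dlap, Subtype.ext_iff] using this

lemma green_eq_floatingWt_div (hκ : kappa1 c ≠ 0) {u v : V} (hu : u ≠ b) (hv : v ≠ b) :
    green c b u v = floatingWt c b u v / kappa1 c := by
  have hinv : (dlap c b)⁻¹ =
      (kappa1 c)⁻¹ • Matrix.of fun p q : {w // w ≠ b} => floatingWt c b p q :=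
    Matrix.inv_eq_right_inv (by rw [Matrix.mul_smul, dlap_mul_floatingWt, smul_smul,
      inv_mul_cancel₀ hκ, one_smul])
  rw [green, dif_neg hu, dif_neg hv, hinv, Matrix.smul_apply, smul_eq_mul, Matrix.of_apply,
    inv_mul_eq_div]


end Green

end TwoSF

open TwoSF

theorem statement_4_general {V : Type*} [Fintype V] [DecidableEq V] (c : Sym2 V → ℝ)
    (hc : ∀ e, 0 ≤ c e)
    (hconn : ncomp (Finset.univ.filter fun e : Sym2 V => c e ≠ 0) = 1)
    (b u v : V) (hu : u ≠ b) (hv : v ≠ b) :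
    pr2 c (fun B => u ∈ floating b B ∧ v ∈ floating b B) =
      kappa1 c / kappa2 c * green c b u v := by
  have hfloating : pr2 c (fun B => u ∈ floating b B ∧ v ∈ floating b B) =
      floatingWt c b u v / kappa2 c := by
    rw [pr2, sum_filter_wt_eq_wtSum, floatingWt]
    exact congrArg (· / kappa2 c) (wtSum_congr fun B => by simp [floating])
  have hκ : kappa1 c ≠ 0 := (kappa1_pos hc hconn).ne'
  rw [hfloating, green_eq_floatingWt_div hκ hu hv, mul_comm, div_mul_div_cancel₀ hκ]

/-- For a finite connected undirected graph with positive
conductances and marked vertex `b`, the probability that two vertices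
`u, v ≠ b` both lie in the floating component `Σ` of a weight-proportional
random two-component spanning forest equals `(κ/κ₂) · G_{u,v}`. -/
theorem statement_4 {V : Type*} [Fintype V] [DecidableEq V] (c : Sym2 V → ℝ)
    (hc : ∀ e, 0 ≤ c e) (hloop : ∀ v : V, c s(v, v) = 0)
    (hconn : ncomp (Finset.univ.filter fun e : Sym2 V => c e ≠ 0) = 1)
    (b u v : V) (hu : u ≠ b) (hv : v ≠ b) :
    pr2 c (fun B => u ∈ floating b B ∧ v ∈ floating b B) =
      kappa1 c / kappa2 c * green c b u v :=
  statement_4_general c hc hconn b u v hu hv
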